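/- arXiv:1511.02360 — 3 statements merged into one kernel-verified Lean document; each statement's English description precedes it below -/
import Mathlib

section
/- Let n ≥ 2 and suppose z ≥ 3 is such that 4 + ∑_{3 ≤ p ≤ z, p prime} p ≤ n. Then the alternating group on a set of n elements contains an element of even order equal to 2·∏_{3 ≤ p ≤ z, p prime} p. -/
open Equiv

theorem Finset.lcm_val_eq_prod_of_prime {S : Finset ℕ} (hS : ∀ p ∈ S, p.Prime) :
    S.val.lcm = ∏ p ∈ S, p := by
  have hcop : Set.Pairwise (S : Set ℕ) (Nat.Coprime.onFun id) := fun p hp q hq hpq =>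
    (Nat.coprime_primes (hS p hp) (hS q hq)).mpr hpq
  simpa [Finset.lcm_def] using Finset.lcm_eq_prod hcop

namespace Equiv.Perm

variable {α : Type*} [Fintype α] [DecidableEq α]

theorem exists_cycleType_eq_two_two_primes {S : Finset ℕ} (hS : ∀ p ∈ S, p.Prime)
    (hcard : 4 + ∑ p ∈ S, p ≤ Fintype.card α) :
    ∃ σ : Perm α, σ.cycleType = 2 ::ₘ 2 ::ₘ S.val := by
  rw [exists_with_cycleType_iff]
  refine ⟨?_, ?_⟩
  · rw [Multiset.sum_cons, Multiset.sum_cons, Finset.sum_val, ← add_assoc]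
    exact hcard
  simp only [Multiset.mem_cons]
  rintro a (rfl | rfl | ha)
  · rfl
  · rfl
  · exact (hS a ha).two_le

-- Each odd cycle is an even permutation, and the two transpositions cancel.
theorem sign_eq_one_of_cycleType_eq_two_two_odd {σ : Perm α} {s : Multiset ℕ}
    (hs : ∀ p ∈ s, Odd p) (hσ : σ.cycleType = 2 ::ₘ 2 ::ₘ s) : sign σ = 1 := by
  have hodd : (s.map fun n => -(-1 : ℤˣ) ^ n).prod = 1 :=
    Multiset.prod_eq_one fun x hx => by
      obtain ⟨p, hp, rfl⟩ := Multiset.mem_map.mp hx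
      simp [(hs p hp).neg_one_pow]
  simp [sign_of_cycleType', hσ, hodd]

theorem orderOf_of_cycleType_eq_two_two_odd_primes {σ : Perm α} {S : Finset ℕ}
    (hprime : ∀ p ∈ S, p.Prime) (hodd : ∀ p ∈ S, Odd p)
    (hσ : σ.cycleType = 2 ::ₘ 2 ::ₘ S.val) : orderOf σ = 2 * ∏ p ∈ S, p := by
  have hcop : Nat.Coprime 2 (∏ p ∈ S, p) :=
    Nat.coprime_two_left.mpr (Finset.prod_induction _ Odd (fun _ _ => Odd.mul) odd_one hodd)
  rw [← lcm_cycleType, hσ, Multiset.lcm_cons, Multiset.lcm_cons,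
    Finset.lcm_val_eq_prod_of_prime hprime, ← lcm_assoc, lcm_same, normalize_eq]
  exact hcop.lcm_eq_mul

end Equiv.Perm

theorem exists_even_order_element_general (n z : ℕ)
    (hsum : 4 + ∑ p ∈ (Finset.Icc 3 z).filter Nat.Prime, p ≤ n) :
    ∃ η ∈ alternatingGroup (Fin n),
      orderOf η = 2 * ∏ p ∈ (Finset.Icc 3 z).filter Nat.Prime, p ∧
      Even (orderOf η) := by
  set S := (Finset.Icc 3 z).filter Nat.Prime
  have hprime : ∀ p ∈ S, p.Prime := fun p hp => (Finset.mem_filter.mp hp).2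
  have hodd : ∀ p ∈ S, Odd p := fun p hp => by
    have h3 : 3 ≤ p := (Finset.mem_Icc.mp (Finset.mem_filter.mp hp).1).1
    exact (hprime p hp).odd_of_ne_two (by omega)
  obtain ⟨σ, hσ⟩ := Perm.exists_cycleType_eq_two_two_primes (α := Fin n) hprime
    (by simpa using hsum)
  have horder := Perm.orderOf_of_cycleType_eq_two_two_odd_primes hprime hodd hσ
  exact ⟨σ, Perm.sign_eq_one_of_cycleType_eq_two_two_odd hodd hσ, horder,
    horder ▸ even_two_mul _⟩

theorem exists_even_order_element (n z : ℕ) (hn : 2 ≤ n) (hz : 3 ≤ z)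
    (hsum : 4 + ∑ p ∈ (Finset.Icc 3 z).filter Nat.Prime, p ≤ n) :
    ∃ η ∈ alternatingGroup (Fin n),
      orderOf η = 2 * ∏ p ∈ (Finset.Icc 3 z).filter Nat.Prime, p ∧
      Even (orderOf η) :=
  exists_even_order_element_general n z hsum
end

section
/- For every real z ≥ 19, the sum of logarithms of odd primes up to z satisfies θ*(z) := ∑_{3 ≤ p ≤ z, p prime} ln p > z/2 implies 4 + ∑_{3 ≤ p ≤ z, p prime} p < (z/ln z)·θ*(z). -/
theorem prime_sum_lt (z : ℝ) (hz : 19 ≤ z)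
    (htheta : (∑ p ∈ (Finset.Icc 3 ⌊z⌋₊).filter Nat.Prime, Real.log p) > z / 2) :
    (4 : ℝ) + ∑ p ∈ (Finset.Icc 3 ⌊z⌋₊).filter Nat.Prime, (p : ℝ) <
      (z / Real.log z) * ∑ p ∈ (Finset.Icc 3 ⌊z⌋₊).filter Nat.Prime, Real.log p := by
  set S := (Finset.Icc 3 ⌊z⌋₊).filter Nat.Prime with hS
  have hzpos : (0:ℝ) < z := by linarith
  have hlogz : (1:ℝ) < Real.log z := by
    have := Real.exp_one_lt_d9
    have h : Real.exp 1 < z := by linarith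
    calc (1:ℝ) = Real.log (Real.exp 1) := (Real.log_exp 1).symm
    _ < Real.log z := Real.log_lt_log (Real.exp_pos 1) h
  have hlogzpos : (0:ℝ) < Real.log z := by linarith
  have hfloor : 19 ≤ ⌊z⌋₊ := by
    have : (19:ℕ) ≤ ⌊z⌋₊ := Nat.le_floor (by exact_mod_cast hz)
    exact this
  have h3S : 3 ∈ S := by
    simp only [hS, Finset.mem_filter, Finset.mem_Icc]
    exact ⟨⟨le_refl 3, by omega⟩, by norm_num⟩
  -- key per-prime bound
  have key : ∀ p ∈ S, (p:ℝ) ≤ z / Real.log z * Real.log p := by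
    intro p hp
    simp only [hS, Finset.mem_filter, Finset.mem_Icc] at hp
    obtain ⟨⟨hp3, hpz⟩, hpp⟩ := hp
    have hpr : (3:ℝ) ≤ (p:ℝ) := by exact_mod_cast hp3
    have hpe : Real.exp 1 ≤ (p:ℝ) := by
      have := Real.exp_one_lt_d9; linarith
    have hpzr : (p:ℝ) ≤ z := le_trans (by exact_mod_cast hpz) (Nat.floor_le hzpos.le)
    have hze : Real.exp 1 ≤ z := le_trans hpe hpzr
    have hanti := Real.log_div_self_antitoneOn (by exact hpe) (by exact hze) hpzr
    -- log z / z ≤ log p / p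
    have hppos : (0:ℝ) < (p:ℝ) := by linarith
    have hlogp : (0:ℝ) < Real.log p := by
      have : (1:ℝ) < (p:ℝ) := by linarith
      exact Real.log_pos this
    rw [div_mul_eq_mul_div, le_div_iff₀ hlogzpos]
    have : Real.log z / z * p ≤ Real.log p / p * p := by
      exact mul_le_mul_of_nonneg_right hanti hppos.le
    rw [div_mul_cancel₀ _ (ne_of_gt hppos)] at this
    calc (p:ℝ) * Real.log z = Real.log z / z * p * z := by field_simp
    _ ≤ Real.log p * z := by nlinarith
    _ = z * Real.log p := by ring
  -- strict bound for p = 3 : 7 < (z / log z) * log 3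
  have hlog3 : (1:ℝ) < Real.log 3 := by
    have := Real.exp_one_lt_d9
    calc (1:ℝ) = Real.log (Real.exp 1) := (Real.log_exp 1).symm
    _ < Real.log 3 := Real.log_lt_log (Real.exp_pos 1) (by linarith)
  have h19 : 7 * Real.log 19 < 19 * Real.log 3 := by
    have h1 : Real.log (19^7 : ℝ) < Real.log (3^19 : ℝ) :=
      Real.log_lt_log (by positivity) (by norm_num)
    rw [Real.log_pow, Real.log_pow] at h1
    exact_mod_cast h1
  have hlogle : Real.log z ≤ Real.log 19 + (z - 19) / 19 := by
    have h1 : Real.log (z / 19) ≤ z / 19 - 1 :=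
      Real.log_le_sub_one_of_pos (by positivity)
    rw [Real.log_div (ne_of_gt hzpos) (by norm_num)] at h1
    linarith
  have h7 : 7 * Real.log z < z * Real.log 3 := by
    have : 7 * Real.log z ≤ 7 * Real.log 19 + 7 * ((z - 19) / 19) := by linarith
    have h2 : 7 * ((z - 19) / 19) ≤ (z - 19) * Real.log 3 := by
      have hz19 : (0:ℝ) ≤ z - 19 := by linarith
      have : 7 / 19 ≤ Real.log 3 := by linarith
      calc 7 * ((z - 19) / 19) = (z - 19) * (7 / 19) := by ring
      _ ≤ (z - 19) * Real.log 3 := mul_le_mul_of_nonneg_left this hz19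
    nlinarith
  have key3 : (7:ℝ) < z / Real.log z * Real.log 3 := by
    rw [div_mul_eq_mul_div, lt_div_iff₀ hlogzpos]
    linarith
  -- combine
  rw [← Finset.add_sum_erase S _ h3S, ← Finset.add_sum_erase S _ h3S]
  have hsum : ∑ p ∈ S.erase 3, (p:ℝ) ≤ ∑ p ∈ S.erase 3, z / Real.log z * Real.log p :=
    Finset.sum_le_sum fun p hp => key p (Finset.mem_of_mem_erase hp)
  rw [mul_add, Finset.mul_sum]
  push_cast
  linarith [hsum]
end

section
/- Let N ≥ 4 and let σ ∈ GL(N, F_2) have even order. Then the order of σ is at most 2^(N-1) - 2. -/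
/-!
Write the minimal polynomial of `σ` as `∏ rᵢ ^ cᵢ` with distinct irreducible `rᵢ` of degree
`dᵢ`, so that `∑ cᵢ dᵢ ≤ N`. Every `rᵢ` divides `X ^ (2 ^ dᵢ - 1) - 1`, so the radical `∏ rᵢ`
divides `X ^ L - 1` for the odd number `L = ∏ (2 ^ dᵢ - 1)`, and if `2 ^ t ≥ max cᵢ` the minimal
polynomial divides `(X ^ L - 1) ^ 2 ^ t = X ^ (2 ^ t * L) - 1`. Hence the order of `σ` divides
`2 ^ t * L`; evenness forces `t ≥ 1`, i.e. a repeated factor, and `2 ^ t * L ≤ 2 ^ (N - 1) - 2`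
is then elementary arithmetic (with equality for `(X + 1) ^ 2` times a primitive polynomial of
degree `N - 2`).
-/

open Polynomial UniqueFactorizationMonoid

namespace UniqueFactorizationMonoid

variable {M : Type*} [CommMonoidWithZero M] [NormalizationMonoid M]
  [UniqueFactorizationMonoid M]

theorem radical_dvd_of_forall_dvd {a b : M} (h : ∀ r ∈ primeFactors a, r ∣ b) : radical a ∣ b :=
  Finset.prod_dvd_of_isRelPrime pairwise_primeFactors_isRelPrime h

theorem dvd_radical_pow_of_forall_count_le [DecidableEq M] {a : M} (ha : a ≠ 0) {n : ℕ}
    (h : ∀ r ∈ primeFactors a, (normalizedFactors a).count r ≤ n) : a ∣ radical a ^ n :=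
  calc a ∣ (normalizedFactors a).prod := (prod_normalizedFactors ha).symm.dvd
    _ = ∏ r ∈ primeFactors a, r ^ (normalizedFactors a).count r := by
      rw [Finset.prod_multiset_count, toFinset_normalizedFactors]
    _ ∣ ∏ r ∈ primeFactors a, r ^ n :=
      Finset.prod_dvd_prod_of_dvd _ _ fun r hr => pow_dvd_pow r (h r hr)
    _ = radical a ^ n := by rw [Finset.prod_pow]; rfl

end UniqueFactorizationMonoid

section Polynomial

variable {K : Type*} [Field K]

theorem Irreducible.dvd_X_pow_card_pow_natDegree_sub_one [Finite K] {f : K[X]}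
    (hf : Irreducible f) (hX : ¬ f ∣ X) : f ∣ X ^ (Nat.card K ^ f.natDegree - 1) - 1 := by
  have h := hf.natDegree_dvd_iff_dvd_X_pow_card_pow_sub_X.mp dvd_rfl
  rw [← pow_sub_one_mul (pow_ne_zero _ Nat.card_pos.ne'), ← sub_one_mul] at h
  exact (hf.prime.dvd_or_dvd h).resolve_right hX

theorem Polynomial.sum_count_normalizedFactors_mul_natDegree [DecidableEq K] {f : K[X]}
    (hf : f ≠ 0) :
    ∑ r ∈ primeFactors f, (normalizedFactors f).count r * r.natDegree = f.natDegree := by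
  simp_rw [← toFinset_normalizedFactors, ← smul_eq_mul, ← Finset.sum_multiset_map_count,
    ← natDegree_multiset_prod _ (zero_notMem_normalizedFactors f)]
  exact natDegree_eq_of_degree_eq (degree_eq_degree_of_associated (prod_normalizedFactors hf))

theorem Matrix.natDegree_minpoly_le {n : Type*} [Fintype n] [DecidableEq n] (M : Matrix n n K) :
    (minpoly K M).natDegree ≤ Fintype.card n :=
  (natDegree_le_of_dvd M.minpoly_dvd_charpoly M.charpoly_monic.ne_zero).trans_eq
    M.charpoly_natDegree_eq_dim

end Polynomial

namespace minpoly

variable {K A : Type*} [Field K] [Ring A] [Algebra K A] {x : A}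

theorem not_X_dvd_of_isUnit (hx : IsIntegral K x) (hu : IsUnit x) : ¬ X ∣ minpoly K x := by
  rintro ⟨q, hq⟩
  have hq0 : q ≠ 0 := by
    rintro rfl
    exact minpoly.ne_zero hx (by simpa using hq)
  have hxq : Polynomial.aeval x q = 0 := by
    have := minpoly.aeval K x
    rwa [hq, map_mul, aeval_X, hu.mul_right_eq_zero] at this
  have : X * q ∣ 1 * q := by simpa [← hq] using minpoly.dvd K x hxq
  exact not_isUnit_X (isUnit_of_dvd_one ((mul_dvd_mul_iff_right hq0).mp this))

variable [DecidableEq K] [Finite K]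

theorem radical_dvd_X_pow_sub_one (hx : IsIntegral K x) (hu : IsUnit x) :
    radical (minpoly K x) ∣
      X ^ (∏ r ∈ primeFactors (minpoly K x), (Nat.card K ^ r.natDegree - 1)) - 1 := by
  refine radical_dvd_of_forall_dvd fun r hr => ?_
  have hr' := mem_primeFactors.mp hr
  have hirr := irreducible_of_normalized_factor r hr'
  have hX : ¬ r ∣ X := fun hrX => not_X_dvd_of_isUnit hx hu <|
    (hirr.associated_of_dvd irreducible_X hrX).symm.dvd.trans (dvd_of_mem_normalizedFactors hr')
  exact (hirr.dvd_X_pow_card_pow_natDegree_sub_one hX).trans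
    (dvd_pow_sub_one_of_dvd (Finset.dvd_prod_of_mem _ hr))

theorem orderOf_dvd_char_pow_mul_prod (p : ℕ) [Fact p.Prime] [CharP K p] (hx : IsIntegral K x)
    (hu : IsUnit x) {t : ℕ} (ht : minpoly K x ∣ radical (minpoly K x) ^ p ^ t) :
    orderOf x ∣ p ^ t * ∏ r ∈ primeFactors (minpoly K x), (Nat.card K ^ r.natDegree - 1) := by
  set L := ∏ r ∈ primeFactors (minpoly K x), (Nat.card K ^ r.natDegree - 1)
  have hdvd : minpoly K x ∣ X ^ (p ^ t * L) - 1 :=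
    calc minpoly K x ∣ radical (minpoly K x) ^ p ^ t := ht
      _ ∣ (X ^ L - 1) ^ p ^ t := pow_dvd_pow_of_dvd (radical_dvd_X_pow_sub_one hx hu) _
      _ = X ^ (p ^ t * L) - 1 := by rw [sub_pow_char_pow, one_pow, ← pow_mul, mul_comm]
  apply orderOf_dvd_of_pow_eq_one
  simpa [sub_eq_zero] using minpoly.dvd_iff.mp hdvd

end minpoly

section Arithmetic

variable {ι : Type*} {s : Finset ι} {d : ι → ℕ}

theorem odd_prod_two_pow_sub_one (hd : ∀ i ∈ s, 0 < d i) : Odd (∏ i ∈ s, (2 ^ d i - 1)) :=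
  Finset.prod_induction _ Odd (fun _ _ => Odd.mul) odd_one fun i hi =>
    Nat.Even.sub_odd Nat.one_le_two_pow ((Nat.even_pow' (hd i hi).ne').mpr even_two) odd_one

theorem prod_two_pow_sub_one_lt (hs : s.Nonempty) (hd : ∀ i ∈ s, 0 < d i) :
    ∏ i ∈ s, (2 ^ d i - 1) < 2 ^ ∑ i ∈ s, d i := by
  rw [← Finset.prod_pow_eq_pow_sum]
  refine Finset.prod_lt_prod_of_nonempty (fun i hi => ?_) (fun i _ => ?_) hs
  · have := Nat.one_lt_two_pow (hd i hi).ne'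
    omega
  · exact Nat.sub_lt (Nat.two_pow_pos _) one_pos

theorem two_pow_mul_le_two_pow_sub_two {t e n P : ℕ} (ht : 0 < t) (hP : P < 2 ^ e)
    (h : t + e ≤ n) : 2 ^ t * P ≤ 2 ^ n - 2 := by
  have h2t : 2 ≤ 2 ^ t := Nat.le_self_pow ht.ne' 2
  have hn : 2 ^ (t + e) ≤ 2 ^ n := Nat.pow_le_pow_right two_pos h
  calc 2 ^ t * P ≤ 2 ^ t * (2 ^ e - 1) := Nat.mul_le_mul_left _ (Nat.le_sub_one_of_lt hP)
    _ = 2 ^ (t + e) - 2 ^ t := by rw [Nat.mul_sub_one, pow_add]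
    _ ≤ 2 ^ n - 2 := by omega

theorem two_mul_le_two_pow_sub_one {n : ℕ} (hn : 4 ≤ n) : 2 * n ≤ 2 ^ (n - 1) := by
  obtain ⟨m, rfl⟩ : ∃ m, n = m + 4 := ⟨n - 4, by omega⟩
  have : m < 2 ^ m := Nat.lt_two_pow_self
  rw [show m + 4 - 1 = m + 3 by omega, pow_add]
  omega

theorem two_pow_mul_prod_two_pow_sub_one_le [DecidableEq ι] {c : ι → ℕ} {j : ι} {t N : ℕ}
    (hN : 4 ≤ N) (hd : ∀ i ∈ s, 0 < d i) (hc : ∀ i ∈ s, 0 < c i) (hj : j ∈ s) (ht : 0 < t)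
    (htc : 2 ^ (t - 1) < c j) (hsum : ∑ i ∈ s, c i * d i ≤ N) :
    2 ^ t * ∏ i ∈ s, (2 ^ d i - 1) ≤ 2 ^ (N - 1) - 2 := by
  have htc' : t < c j := by
    have : t - 1 < 2 ^ (t - 1) := Nat.lt_two_pow_self
    omega
  set e := ∑ i ∈ s.erase j, d i
  have he : e + c j * d j ≤ N := by
    have : e ≤ ∑ i ∈ s.erase j, c i * d i :=
      Finset.sum_le_sum fun i hi =>
        Nat.le_mul_of_pos_left _ (hc i (Finset.mem_of_mem_erase hi))
    rw [← Finset.sum_erase_add _ _ hj] at hsum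
    omega
  obtain hdj | hdj : d j = 1 ∨ 2 ≤ d j := by
    have := hd j hj
    omega
  · rw [← Finset.mul_prod_erase _ _ hj, hdj, pow_one, Nat.add_one_sub_one, one_mul]
    rw [hdj, mul_one] at he
    rcases (s.erase j).eq_empty_or_nonempty with hs | hs
    · rw [hs, Finset.prod_empty, mul_one]
      have he0 : e = 0 := by simp [e, hs]
      have : 2 ^ t ≤ 2 * 2 ^ (t - 1) := by
        rw [← pow_succ']
        exact Nat.pow_le_pow_right two_pos (by omega)
      have := two_mul_le_two_pow_sub_one hN
      omega
    · refine two_pow_mul_le_two_pow_sub_two ht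
        (prod_two_pow_sub_one_lt hs fun i hi => hd i (Finset.mem_of_mem_erase hi)) ?_
      omega
  · refine two_pow_mul_le_two_pow_sub_two ht (prod_two_pow_sub_one_lt ⟨j, hj⟩ hd) ?_
    rw [← Finset.sum_erase_add _ _ hj]
    change t + (e + d j) ≤ N - 1
    have h1 : t * d j + d j ≤ c j * d j := by
      rw [← Nat.succ_mul]
      exact Nat.mul_le_mul_right _ htc'
    have h2 : t * 2 ≤ t * d j := Nat.mul_le_mul_left t hdj
    omega

end Arithmetic

theorem even_order_bound_GL (N : ℕ) (hN : 4 ≤ N) (σ : GL (Fin N) (ZMod 2))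
    (h : Even (orderOf σ)) :
    orderOf σ ≤ 2 ^ (N - 1) - 2 := by
  set x : Matrix (Fin N) (Fin N) (ZMod 2) := ↑σ
  have hx : IsIntegral (ZMod 2) x := Algebra.IsIntegral.isIntegral x
  set P := minpoly (ZMod 2) x
  have hP : P ≠ 0 := minpoly.ne_zero hx
  have : Nonempty (Fin N) := ⟨⟨0, by omega⟩⟩
  have hS : (primeFactors P).Nonempty := Finset.nonempty_iff_ne_empty.mpr
    ((primeFactors_eq_empty_iff hP).not.mpr (minpoly.not_isUnit _ _))
  obtain ⟨j, hj, hmax⟩ := (primeFactors P).exists_max_image (normalizedFactors P).count hS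
  set t := Nat.clog 2 ((normalizedFactors P).count j)
  have hord : orderOf σ ∣ 2 ^ t * ∏ r ∈ primeFactors P, (2 ^ r.natDegree - 1) := by
    rw [← orderOf_units]
    simpa only [Nat.card_zmod] using minpoly.orderOf_dvd_char_pow_mul_prod 2 hx
      σ.isUnit (dvd_radical_pow_of_forall_count_le hP fun r hr =>
        (hmax r hr).trans (Nat.le_pow_clog one_lt_two _))
  have hdeg : ∀ r ∈ primeFactors P, 0 < r.natDegree := fun r hr =>
    (irreducible_of_normalized_factor r (mem_primeFactors.mp hr)).natDegree_pos
  have hodd := odd_prod_two_pow_sub_one hdeg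
  have ht : 0 < t := Nat.pos_of_ne_zero fun ht => by
    rw [ht, pow_zero, one_mul] at hord
    exact hodd.not_two_dvd_nat (h.two_dvd.trans hord)
  have htc : 2 ^ (t - 1) < (normalizedFactors P).count j := Nat.pow_pred_clog_lt_self
    one_lt_two (not_le.mp fun hle => ht.ne' (Nat.clog_of_right_le_one hle 2))
  have hsum : ∑ r ∈ primeFactors P, (normalizedFactors P).count r * r.natDegree ≤ N := by
    simpa [sum_count_normalizedFactors_mul_natDegree hP] using x.natDegree_minpoly_le
  calc orderOf σ ≤ _ := Nat.le_of_dvd (Nat.mul_pos (by positivity) hodd.pos) hord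
    _ ≤ 2 ^ (N - 1) - 2 := two_pow_mul_prod_two_pow_sub_one_le hN hdeg
      (fun r hr => Multiset.count_pos.mpr (mem_primeFactors.mp hr)) hj ht htc hsum
end
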